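/- arXiv:1507.04404 — 5 statements merged into one kernel-verified Lean document; each statement's English description precedes it below -/
import Mathlib

section
/- The sequence (f_k^H)_{k≥1} is monotonically non-increasing: f_{k+1}^H ≤ f_k^H for every integer k ≥ 1. -/
open MvPolynomial MeasureTheory Function

section aux

variable {n : ℕ}

/-- the weight function -/
noncomputable def Wfun (η β : Fin n → ℕ) (x : Fin n → ℝ) : ℝ :=
  ∏ i, x i ^ η i * (1 - x i) ^ β i

lemma Wfun_continuous (η β : Fin n → ℕ) : Continuous (Wfun η β) := by
  unfold Wfun
  exact continuous_finset_prod _ fun i _ => by fun_prop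

lemma hyperplane_null (i : Fin n) (c : ℝ) :
    volume {x : Fin n → ℝ | x i = c} = 0 := by
  have h : {x : Fin n → ℝ | x i = c} =
      Set.univ.pi (fun j => if j = i then ({c} : Set ℝ) else Set.univ) := by
    ext x
    simp only [Set.mem_setOf_eq, Set.mem_pi, Set.mem_univ, true_implies]
    constructor
    · intro h j; by_cases hj : j = i <;> simp [hj, h]
    · intro h; have := h i; simpa using this
  rw [h, volume_pi_pi]
  refine Finset.prod_eq_zero (Finset.mem_univ i) ?_
  simp

lemma Wint_pos (hK : IsCompact K) (hK1 : K ⊆ Set.Icc (0 : Fin n → ℝ) 1)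
    (hKpos : 0 < volume K) (η β : Fin n → ℕ) :
    0 < ∫ x in K, Wfun η β x := by
  have hmeas : MeasurableSet K := hK.measurableSet
  have hnonneg : 0 ≤ᶠ[ae (volume.restrict K)] Wfun η β := by
    refine (ae_restrict_iff' hmeas).2 (ae_of_all _ fun x hx => ?_)
    have h0 := (hK1 hx).1
    have h1 := (hK1 hx).2
    refine Finset.prod_nonneg fun i _ => mul_nonneg (pow_nonneg (h0 i) _)
      (pow_nonneg (by have := h1 i; simpa [sub_nonneg] using this) _)
  have hint : IntegrableOn (Wfun η β) K volume :=
    (Wfun_continuous η β).continuousOn.integrableOn_compact hK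
  rw [setIntegral_pos_iff_support_of_nonneg_ae hnonneg hint]
  -- K \ support ⊆ union of hyperplanes
  have hsub : K \ support (Wfun η β) ⊆
      ⋃ i : Fin n, ({x : Fin n → ℝ | x i = 0} ∪ {x : Fin n → ℝ | x i = 1}) := by
    intro x hx
    have hW : Wfun η β x = 0 := by
      by_contra h; exact hx.2 h
    unfold Wfun at hW
    rcases Finset.prod_eq_zero_iff.1 hW with ⟨i, -, hi⟩
    rcases mul_eq_zero.1 hi with h | h
    · exact Set.mem_iUnion.2 ⟨i, Or.inl (pow_eq_zero_iff'.mp h).1⟩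
    · refine Set.mem_iUnion.2 ⟨i, Or.inr ?_⟩
      have := (pow_eq_zero_iff'.mp h).1
      simp only [Set.mem_setOf_eq]
      linarith [sub_eq_zero.mp this]
  have hnull : volume (K \ support (Wfun η β)) = 0 := by
    refine measure_mono_null hsub ?_
    refine measure_iUnion_null fun i => ?_
    rw [measure_union_null_iff]
    exact ⟨hyperplane_null i 0, hyperplane_null i 1⟩
  have : volume K ≤ volume (support (Wfun η β) ∩ K) := by
    calc volume K ≤ volume ((support (Wfun η β) ∩ K) ∪ (K \ support (Wfun η β))) := by
          refine measure_mono fun x hx => ?_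
          by_cases h : x ∈ support (Wfun η β)
          · exact Or.inl ⟨h, hx⟩
          · exact Or.inr ⟨hx, h⟩
      _ ≤ volume (support (Wfun η β) ∩ K) + volume (K \ support (Wfun η β)) :=
          measure_union_le _ _
      _ = volume (support (Wfun η β) ∩ K) := by rw [hnull, add_zero]
  exact lt_of_lt_of_le hKpos this

lemma mediant {a b c d : ℝ} (hb : 0 < b) (hd : 0 < d) :
    min (a / b) (c / d) ≤ (a + c) / (b + d) := by
  rcases le_total (a / b) (c / d) with h | h
  · rw [min_eq_left h, div_le_div_iff₀ hb (by linarith)]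
    rw [div_le_div_iff₀ hb hd] at h
    nlinarith
  · rw [min_eq_right h, div_le_div_iff₀ hd (by linarith)]
    rw [div_le_div_iff₀ hd hb] at h
    nlinarith

lemma fkH_set_finite (K : Set (Fin n → ℝ)) (f : MvPolynomial (Fin n) ℝ) (m : ℕ) :
    { r : ℝ | ∃ η β : Fin n → ℕ, (∑ i, η i) + (∑ i, β i) = m ∧
      r = (∫ x in K, eval x f * ∏ i, x i ^ η i * (1 - x i) ^ β i) /
          (∫ x in K, ∏ i, x i ^ η i * (1 - x i) ^ β i) }.Finite := by
  have hfin : ((Set.univ.pi fun _ : Fin n => Set.Iic m) ×ˢ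
      (Set.univ.pi fun _ : Fin n => Set.Iic m) :
      Set ((Fin n → ℕ) × (Fin n → ℕ))).Finite :=
    (Set.Finite.pi fun _ => Set.finite_Iic m).prod (Set.Finite.pi fun _ => Set.finite_Iic m)
  refine Set.Finite.subset (hfin.image (fun p : (Fin n → ℕ) × (Fin n → ℕ) =>
    (∫ x in K, eval x f * ∏ i, x i ^ p.1 i * (1 - x i) ^ p.2 i) /
    (∫ x in K, ∏ i, x i ^ p.1 i * (1 - x i) ^ p.2 i))) ?_
  rintro r ⟨η, β, hsum, rfl⟩
  refine ⟨(η, β), ⟨?_, ?_⟩, rfl⟩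
  · intro i _
    simp only [Set.mem_Iic]
    calc η i ≤ ∑ j, η j := Finset.single_le_sum (fun j _ => Nat.zero_le _) (Finset.mem_univ i)
      _ ≤ m := by omega
  · intro i _
    simp only [Set.mem_Iic]
    calc β i ≤ ∑ j, β j := Finset.single_le_sum (fun j _ => Nat.zero_le _) (Finset.mem_univ i)
      _ ≤ m := by omega

lemma prod_add_single (x : Fin n → ℝ) (η β : Fin n → ℕ) (i0 : Fin n) :
    (∏ i, x i ^ (η i + if i = i0 then 1 else 0) * (1 - x i) ^ β i)
      = (∏ i, x i ^ η i * (1 - x i) ^ β i) * x i0 := by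
  have : ∀ i : Fin n, x i ^ (η i + if i = i0 then 1 else 0) * (1 - x i) ^ β i
      = (x i ^ η i * (1 - x i) ^ β i) * (if i = i0 then x i else 1) := by
    intro i
    by_cases h : i = i0 <;> simp [h, pow_add] <;> ring
  rw [Finset.prod_congr rfl fun i _ => this i, Finset.prod_mul_distrib,
    Finset.prod_ite_eq' Finset.univ i0 x]
  simp

lemma prod_add_single' (x : Fin n → ℝ) (η β : Fin n → ℕ) (i0 : Fin n) :
    (∏ i, x i ^ η i * (1 - x i) ^ (β i + if i = i0 then 1 else 0))
      = (∏ i, x i ^ η i * (1 - x i) ^ β i) * (1 - x i0) := by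
  have : ∀ i : Fin n, x i ^ η i * (1 - x i) ^ (β i + if i = i0 then 1 else 0)
      = (x i ^ η i * (1 - x i) ^ β i) * (if i = i0 then 1 - x i else 1) := by
    intro i
    by_cases h : i = i0 <;> simp [h, pow_add] <;> ring
  rw [Finset.prod_congr rfl fun i _ => this i, Finset.prod_mul_distrib,
    Finset.prod_ite_eq' Finset.univ i0 (fun i => 1 - x i)]
  simp

end aux

/-- The upper bound `f_k^H`: minimum over pairs `(η, β)` with `|η| + |β| = k` of
`(∫_K f(x) x^η (1-x)^β dx) / (∫_K x^η (1-x)^β dx)`. -/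
noncomputable def fkH {n : ℕ} (K : Set (Fin n → ℝ)) (f : MvPolynomial (Fin n) ℝ) (k : ℕ) : ℝ :=
  sInf { r : ℝ | ∃ η β : Fin n → ℕ, (∑ i, η i) + (∑ i, β i) = k ∧
    r = (∫ x in K, eval x f * ∏ i, x i ^ η i * (1 - x i) ^ β i) /
        (∫ x in K, ∏ i, x i ^ η i * (1 - x i) ^ β i) }


theorem fkH_antitone
    {n : ℕ} (hn : 1 ≤ n) (K : Set (Fin n → ℝ)) (hK : IsCompact K)
    (hK1 : K ⊆ Set.Icc (0 : Fin n → ℝ) 1) (hKpos : 0 < volume K)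
    (f : MvPolynomial (Fin n) ℝ) (k : ℕ) (hk : 1 ≤ k) :
    fkH K f (k + 1) ≤ fkH K f k := by
  classical
  have i0 : Fin n := ⟨0, hn⟩
  unfold fkH
  have hne : { r : ℝ | ∃ η β : Fin n → ℕ, (∑ i, η i) + (∑ i, β i) = k ∧
      r = (∫ x in K, eval x f * ∏ i, x i ^ η i * (1 - x i) ^ β i) /
          (∫ x in K, ∏ i, x i ^ η i * (1 - x i) ^ β i) }.Nonempty := by
    refine ⟨_, (fun j => if j = i0 then k else 0), 0, ?_, rfl⟩
    simp [Finset.sum_ite_eq' Finset.univ i0 (fun _ => k)]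
  refine le_csInf hne ?_
  rintro r ⟨η, β, hsum, rfl⟩
  have hbdd : BddBelow { r : ℝ | ∃ η β : Fin n → ℕ, (∑ i, η i) + (∑ i, β i) = k + 1 ∧
      r = (∫ x in K, eval x f * ∏ i, x i ^ η i * (1 - x i) ^ β i) /
          (∫ x in K, ∏ i, x i ^ η i * (1 - x i) ^ β i) } :=
    (fkH_set_finite K f (k + 1)).bddBelow
  set η1 : Fin n → ℕ := fun j => η j + if j = i0 then 1 else 0 with hη1
  set β1 : Fin n → ℕ := fun j => β j + if j = i0 then 1 else 0 with hβ1
  have hsum1 : (∑ i, η1 i) + (∑ i, β i) = k + 1 := by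
    simp only [hη1, Finset.sum_add_distrib,
      Finset.sum_ite_eq' Finset.univ i0 (fun _ => 1), Finset.mem_univ, if_true]
    omega
  have hsum2 : (∑ i, η i) + (∑ i, β1 i) = k + 1 := by
    simp only [hβ1, Finset.sum_add_distrib,
      Finset.sum_ite_eq' Finset.univ i0 (fun _ => 1), Finset.mem_univ, if_true]
    omega
  have h1 : sInf { r : ℝ | ∃ η β : Fin n → ℕ, (∑ i, η i) + (∑ i, β i) = k + 1 ∧
      r = (∫ x in K, eval x f * ∏ i, x i ^ η i * (1 - x i) ^ β i) /
          (∫ x in K, ∏ i, x i ^ η i * (1 - x i) ^ β i) } ≤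
      (∫ x in K, eval x f * ∏ i, x i ^ η1 i * (1 - x i) ^ β i) /
          (∫ x in K, ∏ i, x i ^ η1 i * (1 - x i) ^ β i) :=
    csInf_le hbdd ⟨η1, β, hsum1, rfl⟩
  have h2 : sInf { r : ℝ | ∃ η β : Fin n → ℕ, (∑ i, η i) + (∑ i, β i) = k + 1 ∧
      r = (∫ x in K, eval x f * ∏ i, x i ^ η i * (1 - x i) ^ β i) /
          (∫ x in K, ∏ i, x i ^ η i * (1 - x i) ^ β i) } ≤
      (∫ x in K, eval x f * ∏ i, x i ^ η i * (1 - x i) ^ β1 i) /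
          (∫ x in K, ∏ i, x i ^ η i * (1 - x i) ^ β1 i) :=
    csInf_le hbdd ⟨η, β1, hsum2, rfl⟩
  have hD1 : 0 < ∫ x in K, ∏ i, x i ^ η1 i * (1 - x i) ^ β i :=
    Wint_pos hK hK1 hKpos η1 β
  have hD2 : 0 < ∫ x in K, ∏ i, x i ^ η i * (1 - x i) ^ β1 i :=
    Wint_pos hK hK1 hKpos η β1
  -- integrability facts
  have hcontW : ∀ η' β' : Fin n → ℕ,
      Continuous fun x : Fin n → ℝ => eval x f * ∏ i, x i ^ η' i * (1 - x i) ^ β' i :=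
    fun η' β' => (MvPolynomial.continuous_eval f).mul (Wfun_continuous η' β')
  have hint1 : IntegrableOn (fun x : Fin n → ℝ =>
      eval x f * ∏ i, x i ^ η1 i * (1 - x i) ^ β i) K volume :=
    (hcontW η1 β).continuousOn.integrableOn_compact hK
  have hint2 : IntegrableOn (fun x : Fin n → ℝ =>
      eval x f * ∏ i, x i ^ η i * (1 - x i) ^ β1 i) K volume :=
    (hcontW η β1).continuousOn.integrableOn_compact hK
  have hint1' : IntegrableOn (fun x : Fin n → ℝ =>
      ∏ i, x i ^ η1 i * (1 - x i) ^ β i) K volume :=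
    (Wfun_continuous η1 β).continuousOn.integrableOn_compact hK
  have hint2' : IntegrableOn (fun x : Fin n → ℝ =>
      ∏ i, x i ^ η i * (1 - x i) ^ β1 i) K volume :=
    (Wfun_continuous η β1).continuousOn.integrableOn_compact hK
  have hNsum : (∫ x in K, eval x f * ∏ i, x i ^ η1 i * (1 - x i) ^ β i)
      + (∫ x in K, eval x f * ∏ i, x i ^ η i * (1 - x i) ^ β1 i)
      = ∫ x in K, eval x f * ∏ i, x i ^ η i * (1 - x i) ^ β i := by
    rw [← integral_add hint1 hint2]
    refine integral_congr_ae (Filter.Eventually.of_forall fun x => ?_)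
    simp only [hη1, hβ1, prod_add_single x η β i0, prod_add_single' x η β i0]
    ring
  have hDsum : (∫ x in K, ∏ i, x i ^ η1 i * (1 - x i) ^ β i)
      + (∫ x in K, ∏ i, x i ^ η i * (1 - x i) ^ β1 i)
      = ∫ x in K, ∏ i, x i ^ η i * (1 - x i) ^ β i := by
    rw [← integral_add hint1' hint2']
    refine integral_congr_ae (Filter.Eventually.of_forall fun x => ?_)
    simp only [hη1, hβ1, prod_add_single x η β i0, prod_add_single' x η β i0]
    ring
  calc sInf { r : ℝ | ∃ η β : Fin n → ℕ, (∑ i, η i) + (∑ i, β i) = k + 1 ∧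
      r = (∫ x in K, eval x f * ∏ i, x i ^ η i * (1 - x i) ^ β i) /
          (∫ x in K, ∏ i, x i ^ η i * (1 - x i) ^ β i) }
      ≤ min ((∫ x in K, eval x f * ∏ i, x i ^ η1 i * (1 - x i) ^ β i) /
              (∫ x in K, ∏ i, x i ^ η1 i * (1 - x i) ^ β i))
            ((∫ x in K, eval x f * ∏ i, x i ^ η i * (1 - x i) ^ β1 i) /
              (∫ x in K, ∏ i, x i ^ η i * (1 - x i) ^ β1 i)) := le_min h1 h2
    _ ≤ ((∫ x in K, eval x f * ∏ i, x i ^ η1 i * (1 - x i) ^ β i)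
          + (∫ x in K, eval x f * ∏ i, x i ^ η i * (1 - x i) ^ β1 i)) /
        ((∫ x in K, ∏ i, x i ^ η1 i * (1 - x i) ^ β i)
          + (∫ x in K, ∏ i, x i ^ η i * (1 - x i) ^ β1 i)) := mediant hD1 hD2
    _ = (∫ x in K, eval x f * ∏ i, x i ^ η i * (1 - x i) ^ β i) /
        (∫ x in K, ∏ i, x i ^ η i * (1 - x i) ^ β i) := by rw [hNsum, hDsum]
end

section
/- Let f ∈ ℝ[x₁,…,xₙ] be a polynomial and let x* be a global minimizer of f over [0,1]^n. Then there exists a constant C_f > 0 (depending on f) such that f_{min,Q(k)} − f(x*) ≤ C_f/k² for all integers k ≥ 1, where Q(k) := {x ∈ [0,1]^n : kx ∈ ℕ^n} is the regular grid of rational points with denominator k and f_{min,Q(k)} := min_{x ∈ Q(k)} f(x). -/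
open Polynomial

lemma gsr_mul_coeff_bound (ε : ℝ) (hε : 0 ≤ ε) (q r : Polynomial ℝ) (d e : ℕ)
    (hq : ∀ m, |q.coeff m| ≤ d.choose m * ε ^ m)
    (hr : ∀ m, |r.coeff m| ≤ e.choose m * ε ^ m) :
    ∀ m, |(q * r).coeff m| ≤ (d + e).choose m * ε ^ m := by
  intro m
  rw [Polynomial.coeff_mul]
  calc |∑ x ∈ Finset.HasAntidiagonal.antidiagonal m, q.coeff x.1 * r.coeff x.2|
      ≤ ∑ x ∈ Finset.HasAntidiagonal.antidiagonal m, |q.coeff x.1 * r.coeff x.2| :=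
        Finset.abs_sum_le_sum_abs _ _
    _ ≤ ∑ x ∈ Finset.HasAntidiagonal.antidiagonal m, (d.choose x.1 * ε ^ x.1) * (e.choose x.2 * ε ^ x.2) := by
        apply Finset.sum_le_sum; intro x hx
        rw [abs_mul]
        exact mul_le_mul (hq x.1) (hr x.2) (abs_nonneg _) (by positivity)
    _ = (d + e).choose m * ε ^ m := by
        rw [Nat.add_choose_eq]
        push_cast
        rw [Finset.sum_mul]
        apply Finset.sum_congr rfl
        intro x hx
        rw [Finset.HasAntidiagonal.mem_antidiagonal] at hx
        rw [← hx, pow_add]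
        ring

lemma gsr_base_coeff_bound (ε : ℝ) (hε : 0 ≤ ε) (a b : ℝ) (ha : |a| ≤ 1) (hb : |b| ≤ ε) :
    ∀ m, |(C a + C b * X : Polynomial ℝ).coeff m| ≤ (1 : ℕ).choose m * ε ^ m := by
  intro m
  match m with
  | 0 => simpa using ha
  | 1 => simpa using hb
  | (m+2) =>
      have h1 : (C a + C b * X : Polynomial ℝ).coeff (m + 2) = 0 := by
        rw [coeff_add, coeff_C, Polynomial.coeff_C_mul, Polynomial.coeff_X]
        norm_num
      rw [h1, abs_zero]
      positivity

lemma gsr_pow_coeff_bound (ε : ℝ) (hε : 0 ≤ ε) (a b : ℝ) (ha : |a| ≤ 1) (hb : |b| ≤ ε) (e : ℕ) :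
    ∀ m, |((C a + C b * X : Polynomial ℝ) ^ e).coeff m| ≤ e.choose m * ε ^ m := by
  induction e with
  | zero =>
      intro m
      match m with
      | 0 => simp
      | (m+1) => simp [Polynomial.coeff_one]
  | succ e ih =>
      intro m
      rw [pow_succ]
      exact gsr_mul_coeff_bound ε hε _ _ e 1 ih (gsr_base_coeff_bound ε hε a b ha hb) m

lemma gsr_prod_coeff_bound {n : ℕ} (ε : ℝ) (hε : 0 ≤ ε) (a b : Fin n → ℝ)
    (ha : ∀ i, |a i| ≤ 1) (hb : ∀ i, |b i| ≤ ε) (α : Fin n → ℕ) (s : Finset (Fin n)) :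
    ∀ m, |(∏ i ∈ s, (C (a i) + C (b i) * X : Polynomial ℝ) ^ α i).coeff m|
      ≤ (∑ i ∈ s, α i).choose m * ε ^ m := by
  induction s using Finset.cons_induction with
  | empty =>
      intro m
      match m with
      | 0 => simp
      | (m+1) => simp [Polynomial.coeff_one]
  | cons i s hi ih =>
      intro m
      rw [Finset.prod_cons, Finset.sum_cons]
      exact gsr_mul_coeff_bound ε hε _ _ _ _
        (gsr_pow_coeff_bound ε hε (a i) (b i) (ha i) (hb i) (α i)) ih m

lemma gsr_choose_le_two_pow (d m : ℕ) : d.choose m ≤ 2 ^ d := by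
  rcases le_or_gt m d with h | h
  · calc d.choose m ≤ ∑ j ∈ Finset.range (d + 1), d.choose j :=
        Finset.single_le_sum (fun j _ => Nat.zero_le _) (Finset.mem_range.mpr (Nat.lt_succ_of_le h))
      _ = 2 ^ d := Nat.sum_range_choose d
  · simp [Nat.choose_eq_zero_of_lt h]

open MvPolynomial

/-- The regular grid `Q(k)` of points in `[0,1]^n` with denominator `k`. -/
def gridQ (n k : ℕ) : Set (Fin n → ℝ) :=
  { x | x ∈ Set.Icc (0 : Fin n → ℝ) 1 ∧ ∀ i, ∃ m : ℕ, (k : ℝ) * x i = m }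

theorem grid_search_rate
    {n : ℕ} (hn : 1 ≤ n) (f : MvPolynomial (Fin n) ℝ) (xstar : Fin n → ℝ)
    (hx : xstar ∈ Set.Icc (0 : Fin n → ℝ) 1)
    (hmin : ∀ x ∈ Set.Icc (0 : Fin n → ℝ) 1, eval xstar f ≤ eval x f) :
    ∃ C : ℝ, 0 < C ∧ ∀ k : ℕ, 1 ≤ k →
      sInf ((fun x => eval x f) '' gridQ n k) - eval xstar f ≤ C / (k : ℝ) ^ 2 := by
  classical
  have hnne : Nonempty (Fin n) := ⟨⟨0, hn⟩⟩
  set D := f.totalDegree with hD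
  set A : ℝ := ∑ α ∈ f.support, |MvPolynomial.coeff α f| * 2 ^ D with hA
  have hA0 : 0 ≤ A := Finset.sum_nonneg fun α _ => by positivity
  refine ⟨(D : ℝ) * A + 1, by nlinarith [mul_nonneg (Nat.cast_nonneg (α := ℝ) D) hA0], ?_⟩
  intro k hk
  have hk0 : (0 : ℝ) < k := by exact_mod_cast hk
  set ε : ℝ := 1 / k with hεdef
  have hε0 : 0 < ε := by positivity
  have hε1 : ε ≤ 1 := by rw [hεdef, div_le_one hk0]; exact_mod_cast hk
  have hx0 : ∀ i, 0 ≤ xstar i := fun i => hx.1 i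
  have hx1 : ∀ i, xstar i ≤ 1 := fun i => hx.2 i
  set v : Fin n → ℝ := fun i => (⌊(k : ℝ) * xstar i⌋ : ℝ) / k - xstar i with hv
  have hfl0 : ∀ i, 0 ≤ (⌊(k : ℝ) * xstar i⌋ : ℝ) := by
    intro i
    have : (0 : ℤ) ≤ ⌊(k : ℝ) * xstar i⌋ := Int.floor_nonneg.mpr (mul_nonneg hk0.le (hx0 i))
    exact_mod_cast this
  have hfl1 : ∀ i, (⌊(k : ℝ) * xstar i⌋ : ℝ) ≤ (k : ℝ) * xstar i := fun i => Int.floor_le _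
  have hfl2 : ∀ i, (k : ℝ) * xstar i - 1 < (⌊(k : ℝ) * xstar i⌋ : ℝ) := fun i =>
    Int.sub_one_lt_floor _
  have hvnp : ∀ i, v i ≤ 0 := by
    intro i
    rw [hv]
    have : (⌊(k : ℝ) * xstar i⌋ : ℝ) / k ≤ xstar i := by
      rw [div_le_iff₀ hk0]
      have := hfl1 i; linarith [this]
    simp only; linarith
  have hvlow : ∀ i, -ε ≤ v i := by
    intro i
    rw [hv]
    have h2 : xstar i - 1 / k ≤ (⌊(k : ℝ) * xstar i⌋ : ℝ) / k := by
      rw [le_div_iff₀ hk0]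
      have := hfl2 i
      have hexp : (xstar i - 1 / ↑k) * ↑k = ↑k * xstar i - 1 := by field_simp
      rw [hexp]; linarith
    simp only [hεdef]; linarith
  have hvle : ∀ i, |v i| ≤ ε := by
    intro i; rw [abs_le]; exact ⟨hvlow i, le_trans (hvnp i) hε0.le⟩
  have hvzero : ∀ i, v i ≠ 0 → 0 < xstar i ∧ xstar i < 1 := by
    intro i hvi
    constructor
    · rcases (hx0 i).lt_or_eq with h | h
      · exact h
      · exfalso; apply hvi; rw [hv]; simp only [← h, mul_zero]; norm_num
    · rcases (hx1 i).lt_or_eq with h | h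
      · exact h
      · exfalso; apply hvi; rw [hv]; simp only [h, mul_one, Int.floor_natCast]
        field_simp
        simp
  set y : Fin n → ℝ := fun i => xstar i + v i with hy
  have hyg : y ∈ gridQ n k := by
    refine ⟨⟨fun i => ?_, fun i => ?_⟩, fun i => ?_⟩
    · show (0 : ℝ) ≤ y i
      have : y i = (⌊(k : ℝ) * xstar i⌋ : ℝ) / k := by rw [hy, hv]; ring
      rw [this]; exact div_nonneg (hfl0 i) hk0.le
    · show y i ≤ 1
      have := hvnp i; have := hx1 i; rw [hy]; simp only; linarith
    · refine ⟨(⌊(k : ℝ) * xstar i⌋).toNat, ?_⟩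
      have htn : ((⌊(k : ℝ) * xstar i⌋).toNat : ℝ) = (⌊(k : ℝ) * xstar i⌋ : ℝ) := by
        have : (0 : ℤ) ≤ ⌊(k : ℝ) * xstar i⌋ := Int.floor_nonneg.mpr (mul_nonneg hk0.le (hx0 i))
        exact_mod_cast Int.toNat_of_nonneg this
      rw [htn, hy, hv]
      field_simp
      ring
  set p : Polynomial ℝ := ∑ α ∈ f.support, Polynomial.C (MvPolynomial.coeff α f) *
      ∏ i, (Polynomial.C (xstar i) + Polynomial.C (v i) * Polynomial.X) ^ α i with hp
  have hpe : ∀ t : ℝ, Polynomial.eval t p = MvPolynomial.eval (fun i => xstar i + v i * t) f := by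
    intro t
    rw [MvPolynomial.eval_eq', hp, Polynomial.eval_finset_sum]
    apply Finset.sum_congr rfl
    intro α hα
    simp [Polynomial.eval_prod]
  have hxabs : ∀ i, |xstar i| ≤ 1 := by
    intro i; rw [abs_le]; exact ⟨by linarith [hx0 i], hx1 i⟩
  have hcoeff : ∀ m, |p.coeff m| ≤
      ∑ α ∈ f.support, |MvPolynomial.coeff α f| * ((∑ i, α i).choose m * ε ^ m) := by
    intro m
    rw [hp, Polynomial.finset_sum_coeff]
    refine (Finset.abs_sum_le_sum_abs _ _).trans (Finset.sum_le_sum ?_)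
    intro α hα
    rw [Polynomial.coeff_C_mul, abs_mul]
    exact mul_le_mul_of_nonneg_left
      (gsr_prod_coeff_bound ε hε0.le xstar v hxabs hvle (fun i => α i) Finset.univ m)
      (abs_nonneg _)
  have hsumle : ∀ α ∈ f.support, (∑ i, (α : Fin n →₀ ℕ) i) ≤ D := by
    intro α hα
    have h1 := MvPolynomial.le_totalDegree hα
    have h2 : (α.sum fun _ e => e) = ∑ i, α i := Finsupp.sum_fintype _ _ (fun _ => rfl)
    rw [h2] at h1; exact h1
  have hczero : ∀ m, D < m → p.coeff m = 0 := by
    intro m hm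
    have h := hcoeff m
    have hz : ∑ α ∈ f.support, |MvPolynomial.coeff α f| * ((∑ i, α i).choose m * ε ^ m) = 0 := by
      apply Finset.sum_eq_zero
      intro α hα
      rw [Nat.choose_eq_zero_of_lt (lt_of_le_of_lt (hsumle α hα) hm)]
      simp
    rw [hz] at h
    exact abs_eq_zero.mp (le_antisymm h (abs_nonneg _))
  have hdeg : p.natDegree < D + 2 := by
    have : p.natDegree ≤ D := Polynomial.natDegree_le_iff_coeff_eq_zero.mpr hczero
    omega
  have hcoeffA : ∀ m, |p.coeff m| ≤ A * ε ^ m := by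
    intro m
    refine (hcoeff m).trans ?_
    rw [hA, Finset.sum_mul]
    apply Finset.sum_le_sum
    intro α hα
    have hch : ((∑ i, α i).choose m : ℝ) ≤ 2 ^ D := by
      calc ((∑ i, α i).choose m : ℝ) ≤ 2 ^ (∑ i, α i) := by
            exact_mod_cast gsr_choose_le_two_pow _ m
        _ ≤ 2 ^ D := by
            exact_mod_cast pow_le_pow_right₀ (by norm_num : (1:ℝ) ≤ 2) (hsumle α hα)
    calc |MvPolynomial.coeff α f| * ((∑ i, α i).choose m * ε ^ m)
        ≤ |MvPolynomial.coeff α f| * (2 ^ D * ε ^ m) := by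
          apply mul_le_mul_of_nonneg_left _ (abs_nonneg _)
          exact mul_le_mul_of_nonneg_right hch (by positivity)
      _ = |MvPolynomial.coeff α f| * 2 ^ D * ε ^ m := by ring
  -- local minimum along the segment
  set g : ℝ → ℝ := fun t => Polynomial.eval t p with hg
  have hg0 : g 0 = MvPolynomial.eval xstar f := by
    rw [hg]; simp only; rw [hpe 0]
    have hfn : (fun i => xstar i + v i * 0) = xstar := by funext i; ring
    rw [hfn]
  set δ : ℝ := Finset.univ.inf' Finset.univ_nonempty
      (fun i => if v i = 0 then 1 else min (xstar i) (1 - xstar i)) with hδ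
  have hδ0 : 0 < δ := by
    rw [hδ, Finset.lt_inf'_iff]
    intro i _
    by_cases h : v i = 0
    · simp [h]
    · simp only [h, if_false, lt_min_iff]
      obtain ⟨h1, h2⟩ := hvzero i h
      exact ⟨h1, by linarith⟩
  have hmem : ∀ t : ℝ, |t| < δ → (fun i => xstar i + v i * t) ∈ Set.Icc (0 : Fin n → ℝ) 1 := by
    intro t ht
    have hkey : ∀ i, 0 ≤ xstar i + v i * t ∧ xstar i + v i * t ≤ 1 := by
      intro i
      by_cases h : v i = 0
      · rw [h]; simp; exact ⟨hx0 i, hx1 i⟩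
      · have hδi : δ ≤ min (xstar i) (1 - xstar i) := by
          have h2 : δ ≤ (if v i = 0 then 1 else min (xstar i) (1 - xstar i)) :=
            Finset.inf'_le (fun j => if v j = 0 then 1 else min (xstar j) (1 - xstar j))
              (Finset.mem_univ i)
          rwa [if_neg h] at h2
        have habs : |v i * t| < min (xstar i) (1 - xstar i) := by
          rw [abs_mul]
          calc |v i| * |t| ≤ 1 * |t| := by
                apply mul_le_mul_of_nonneg_right _ (abs_nonneg t)
                exact le_trans (hvle i) hε1
            _ = |t| := one_mul _
            _ < δ := ht
            _ ≤ _ := hδi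
        have h1 := abs_lt.mp (lt_of_lt_of_le habs (min_le_left _ _))
        have h2 := abs_lt.mp (lt_of_lt_of_le habs (min_le_right _ _))
        constructor <;> linarith [h1.1, h1.2, h2.1, h2.2]
    exact ⟨fun i => (hkey i).1, fun i => (hkey i).2⟩
  have hlocal : IsLocalMin g 0 := by
    apply Metric.eventually_nhds_iff.mpr
    refine ⟨δ, hδ0, fun t ht => ?_⟩
    rw [Real.dist_eq, sub_zero] at ht
    rw [hg0, hg]
    simp only
    rw [hpe t]
    exact hmin _ (hmem t ht)
  have hc1 : p.coeff 1 = 0 := by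
    have h := hlocal.deriv_eq_zero
    rw [hg] at h
    rw [Polynomial.deriv] at h
    rw [← Polynomial.coeff_zero_eq_eval_zero, Polynomial.coeff_derivative] at h
    simpa using h
  -- conclusion
  have h0 : p.coeff 0 = MvPolynomial.eval xstar f := by
    rw [Polynomial.coeff_zero_eq_eval_zero, hpe 0]
    have hfn : (fun i => xstar i + v i * 0) = xstar := by funext i; ring
    rw [hfn]
  have heval1 : Polynomial.eval 1 p = ∑ m ∈ Finset.range (D + 2), p.coeff m := by
    rw [Polynomial.eval_eq_sum_range' hdeg]
    simp
  have hsplit : ∑ m ∈ Finset.range (D + 2), p.coeff m =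
      p.coeff 0 + p.coeff 1 + ∑ m ∈ Finset.Ico 2 (D + 2), p.coeff m := by
    rw [Finset.range_eq_Ico, ← Finset.sum_Ico_consecutive _ (by omega : 0 ≤ 2) (by omega : 2 ≤ D + 2)]
    congr 1
    rw [show Finset.Ico 0 2 = Finset.range 2 by rw [Finset.range_eq_Ico]]
    rw [Finset.sum_range_succ, Finset.sum_range_one]
  have htail : ∑ m ∈ Finset.Ico 2 (D + 2), p.coeff m ≤ (D : ℝ) * A * ε ^ 2 := by
    calc ∑ m ∈ Finset.Ico 2 (D + 2), p.coeff m
        ≤ ∑ m ∈ Finset.Ico 2 (D + 2), A * ε ^ 2 := by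
          apply Finset.sum_le_sum
          intro m hm
          rw [Finset.mem_Ico] at hm
          refine le_trans (le_abs_self _) ((hcoeffA m).trans ?_)
          exact mul_le_mul_of_nonneg_left
            (pow_le_pow_of_le_one hε0.le hε1 hm.1) hA0
      _ = (D : ℝ) * A * ε ^ 2 := by
          rw [Finset.sum_const, Nat.card_Ico]
          simp only [nsmul_eq_mul]
          norm_num; ring
  have hyval : MvPolynomial.eval y f = Polynomial.eval 1 p := by
    rw [hpe 1]
    have hfn : (fun i => xstar i + v i * 1) = y := by funext i; rw [hy]; ring
    rw [hfn]
  have hfy : MvPolynomial.eval y f - MvPolynomial.eval xstar f ≤ (D : ℝ) * A * ε ^ 2 := by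
    rw [hyval, heval1, hsplit, hc1, h0]
    linarith [htail]
  have hbdd : BddBelow ((fun x => MvPolynomial.eval x f) '' gridQ n k) := by
    refine ⟨MvPolynomial.eval xstar f, ?_⟩
    rintro z ⟨x, hxg, rfl⟩
    exact hmin x hxg.1
  have hsinf : sInf ((fun x => MvPolynomial.eval x f) '' gridQ n k) ≤ MvPolynomial.eval y f :=
    csInf_le hbdd ⟨y, hyg, rfl⟩
  have hε2 : ε ^ 2 = 1 / (k : ℝ) ^ 2 := by rw [hεdef, div_pow]; norm_num
  have hfinal : (D : ℝ) * A * ε ^ 2 ≤ ((D : ℝ) * A + 1) / (k : ℝ) ^ 2 := by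
    rw [hε2]
    rw [mul_one_div, div_le_div_iff₀ (by positivity) (by positivity)]
    nlinarith [mul_nonneg (Nat.cast_nonneg (α := ℝ) D) hA0, sq_nonneg (k : ℝ)]
  linarith
end

section
/- Assume K ⊆ [0,1]^n is compact, convex, and has positive Lebesgue measure, and let f ∈ ℝ[x₁,…,xₙ] be a convex polynomial. Let (η,β) ∈ ℕ^n × ℕ^n with |η| + |β| = k attain the minimum in the definition of f_k^H, and define the barycenter x̄ ∈ ℝ^n by x̄ := (∫_K x · x^η (1−x)^β dx)/(∫_K x^η (1−x)^β dx). Then x̄ ∈ K and f(x̄) ≤ f_k^H. -/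
open MvPolynomial MeasureTheory

theorem barycenter_value_le_fkH_of_convex
    {n : ℕ} (hn : 1 ≤ n) (K : Set (Fin n → ℝ)) (hK : IsCompact K) (hKconv : Convex ℝ K)
    (hK1 : K ⊆ Set.Icc (0 : Fin n → ℝ) 1) (hKpos : 0 < volume K)
    (f : MvPolynomial (Fin n) ℝ) (hf : ConvexOn ℝ Set.univ (fun x => eval x f))
    (k : ℕ) (hk : 1 ≤ k) (η β : Fin n → ℕ)
    (hsum : (∑ i, η i) + (∑ i, β i) = k)
    (hopt : (∫ x in K, eval x f * ∏ i, x i ^ η i * (1 - x i) ^ β i) /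
            (∫ x in K, ∏ i, x i ^ η i * (1 - x i) ^ β i) = fkH K f k) :
    (fun i => (∫ x in K, x i * ∏ j, x j ^ η j * (1 - x j) ^ β j) /
              (∫ x in K, ∏ j, x j ^ η j * (1 - x j) ^ β j)) ∈ K ∧
    eval (fun i => (∫ x in K, x i * ∏ j, x j ^ η j * (1 - x j) ^ β j) /
                   (∫ x in K, ∏ j, x j ^ η j * (1 - x j) ^ β j)) f ≤ fkH K f k := by
  classical
  set w : (Fin n → ℝ) → ℝ := fun x => ∏ i, x i ^ η i * (1 - x i) ^ β i with hw
  have hwc : Continuous w := by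
    apply continuous_finset_prod
    intro i _
    exact ((continuous_apply i).pow _).mul ((continuous_const.sub (continuous_apply i)).pow _)
  have hKm : MeasurableSet K := hK.isClosed.measurableSet
  have hwnn : ∀ x ∈ K, 0 ≤ w x := by
    intro x hx
    refine Finset.prod_nonneg fun i _ => mul_nonneg (pow_nonneg ?_ _) (pow_nonneg ?_ _)
    · exact (hK1 hx).1 i
    · simpa using sub_nonneg.2 ((hK1 hx).2 i)
  have hwnn_ae : 0 ≤ᵐ[volume.restrict K] w :=
    (ae_restrict_iff' hKm).2 (Filter.Eventually.of_forall hwnn)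
  have hint : IntegrableOn w K := hwc.continuousOn.integrableOn_compact hK
  set I : ℝ := ∫ x in K, w x with hIdef
  -- positivity of the denominator
  have hI : 0 < I := by
    rw [hIdef, setIntegral_pos_iff_support_of_nonneg_ae hwnn_ae hint]
    have hZ : volume (K \ Function.support w) = 0 := by
      have hsub : K \ Function.support w ⊆
          ⋃ i : Fin n, ({x : Fin n → ℝ | x i = 0} ∪ {x : Fin n → ℝ | x i = 1}) := by
        rintro x ⟨hxK, hxs⟩
        simp only [Function.mem_support, not_not] at hxs
        obtain ⟨i, -, hi⟩ := Finset.prod_eq_zero_iff.1 hxs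
        rcases mul_eq_zero.1 hi with h | h
        · exact Set.mem_iUnion.2 ⟨i, Or.inl (pow_eq_zero_iff'.1 h).1⟩
        · exact Set.mem_iUnion.2
            ⟨i, Or.inr (show x i = 1 by have := (pow_eq_zero_iff'.1 h).1; linarith)⟩
      refine measure_mono_null hsub (measure_iUnion_null fun i => measure_union_null ?_ ?_)
      · exact MeasureTheory.Measure.pi_hyperplane _ i 0
      · exact MeasureTheory.Measure.pi_hyperplane _ i 1
    have hle : volume K ≤ volume (Function.support w ∩ K) := by
      calc volume K ≤ volume ((Function.support w ∩ K) ∪ (K \ Function.support w)) := by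
            apply measure_mono; intro x hx
            by_cases h : x ∈ Function.support w
            · exact Or.inl ⟨h, hx⟩
            · exact Or.inr ⟨hx, h⟩
        _ ≤ volume (Function.support w ∩ K) + volume (K \ Function.support w) :=
            measure_union_le _ _
        _ = volume (Function.support w ∩ K) := by rw [hZ, add_zero]
    exact lt_of_lt_of_le hKpos hle
  -- the weighted measure
  set d : (Fin n → ℝ) → NNReal := fun x => (w x).toNNReal with hd
  have hdm : Measurable d := hwc.measurable.real_toNNReal
  have hdc : Continuous d := continuous_real_toNNReal.comp hwc
  set μ : Measure (Fin n → ℝ) := (volume.restrict K).withDensity (fun x => (d x : ENNReal))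
    with hμ
  have hμuniv : μ Set.univ = ENNReal.ofReal I := by
    rw [hμ, withDensity_apply _ MeasurableSet.univ, Measure.restrict_univ,
      ofReal_integral_eq_lintegral_ofReal hint hwnn_ae]
    rfl
  haveI : IsFiniteMeasure μ := ⟨by rw [hμuniv]; exact ENNReal.ofReal_lt_top⟩
  haveI : NeZero μ := ⟨by
    rw [← Measure.measure_univ_ne_zero, hμuniv]
    simpa [ENNReal.ofReal_eq_zero] using hI⟩
  have hμtoReal : (μ Set.univ).toReal = I := by rw [hμuniv, ENNReal.toReal_ofReal hI.le]
  -- a.e. membership in K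
  have haeK : ∀ᵐ x ∂μ, x ∈ K :=
    (withDensity_absolutelyContinuous (volume.restrict K) _).ae_le (ae_restrict_mem hKm)
  -- integrals against μ
  have hint' : ∀ {E : Type} [NormedAddCommGroup E] [NormedSpace ℝ E]
      (g : (Fin n → ℝ) → E), Continuous g →
      Integrable g μ ∧ ∫ x, g x ∂μ = ∫ x in K, w x • g x := by
    intro E _ _ g hg
    constructor
    · rw [hμ, integrable_withDensity_iff_integrable_smul hdm]
      exact (((NNReal.continuous_coe.comp hdc).smul hg).continuousOn).integrableOn_compact hK
    · rw [hμ, integral_withDensity_eq_integral_smul hdm]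
      refine setIntegral_congr_fun hKm fun x hx => ?_
      simp only [NNReal.smul_def, hd, Real.coe_toNNReal _ (hwnn x hx)]
  obtain ⟨hid_int, hid_eq⟩ := hint' (fun x => x) continuous_id
  have hfc : Continuous fun x : Fin n → ℝ => eval x f := by
    have : (fun x : Fin n → ℝ => eval x f) = fun x => f.eval x := rfl
    exact f.continuous_eval
  obtain ⟨hf_int, hf_eq⟩ := hint' (fun x => eval x f) hfc
  -- identify the barycenter
  have hbary : (fun i => (∫ x in K, x i * ∏ j, x j ^ η j * (1 - x j) ^ β j) /
      (∫ x in K, ∏ j, x j ^ η j * (1 - x j) ^ β j)) = ⨍ x, x ∂μ := by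
    funext i
    have hproj := (ContinuousLinearMap.proj (R := ℝ) (φ := fun _ : Fin n => ℝ)
      i).integral_comp_comm hid_int
    rw [average_eq, measureReal_def, hμtoReal]
    have : (∫ x, x ∂μ) i = ∫ x, x i ∂μ := by
      simpa using hproj.symm
    simp only [Pi.smul_apply, smul_eq_mul, this]
    rw [show (∫ x, x i ∂μ) = ∫ x in K, w x • (x i) by
      obtain ⟨_, h⟩ := hint' (fun x => x i) (continuous_apply i); exact h]
    rw [div_eq_inv_mul]
    congr 1
    refine setIntegral_congr_fun hKm fun x hx => ?_
    simp [hw, mul_comm]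
  have hval : ⨍ x, eval x f ∂μ = fkH K f k := by
    rw [average_eq, measureReal_def, hμtoReal, hf_eq, ← hopt]
    rw [div_eq_inv_mul, smul_eq_mul]
    congr 1
    refine setIntegral_congr_fun hKm fun x hx => ?_
    simp [hw, mul_comm]
  constructor
  · rw [hbary]
    exact hKconv.average_mem hK.isClosed haeK hid_int
  · rw [hbary, ← hval]
    exact (hf.subset (Set.subset_univ K) hKconv).map_average_le hfc.continuousOn
      hK.isClosed haeK hid_int hf_int
end

section
/- Take K = [0,1]^n and let f ∈ ℝ[x₁,…,xₙ] be a polynomial all of whose coefficients are nonnegative. Let (η,β) ∈ ℕ^n × ℕ^n with |η| + |β| = k attain the minimum in the definition of f_k^H, and define x̄ ∈ [0,1]^n by x̄_i := (η_i + 1)/(η_i + β_i + 2) for each i. Then f(x̄) ≤ f_k^H. -/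
open MvPolynomial MeasureTheory

noncomputable def Jb (p q : ℕ) : ℝ := ∫ t in (0:ℝ)..1, t ^ p * (1 - t) ^ q

lemma contJ (p q : ℕ) : Continuous (fun t : ℝ => t ^ p * (1 - t) ^ q) := by fun_prop

lemma Jb_eq (p q : ℕ) : (∫ t in Set.Icc (0:ℝ) 1, t ^ p * (1 - t) ^ q) = Jb p q := by
  rw [Jb, intervalIntegral.integral_of_le zero_le_one,
    MeasureTheory.integral_Icc_eq_integral_Ioc]

lemma Jb_pos (p q : ℕ) : 0 < Jb p q := by
  apply intervalIntegral.intervalIntegral_pos_of_pos_on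
  · exact (contJ p q).intervalIntegrable 0 1
  · intro x hx
    exact mul_pos (pow_pos hx.1 _) (pow_pos (by linarith [hx.2]) _)
  · exact zero_lt_one

lemma Jb_parts (p q : ℕ) : ((p:ℝ)+1) * Jb p (q+1) = ((q:ℝ)+1) * Jb (p+1) q := by
  have h : ∀ x : ℝ, HasDerivAt (fun t : ℝ => t ^ (p+1) * (1 - t) ^ (q+1))
      (((p:ℝ)+1) * (x ^ p * (1-x)^(q+1)) - ((q:ℝ)+1) * (x^(p+1) * (1-x)^q)) x := by
    intro x
    have h1 : HasDerivAt (fun t : ℝ => t ^ (p+1)) (((p:ℝ)+1) * x ^ p) x := by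
      simpa using hasDerivAt_pow (p+1) x
    have h2 : HasDerivAt (fun t : ℝ => (1 - t) ^ (q+1)) (-(((q:ℝ)+1) * (1-x) ^ q)) x := by
      have h3 : HasDerivAt (fun t : ℝ => (1 - t)) (-1) x := by
        simpa using (hasDerivAt_id x).const_sub 1
      have := (hasDerivAt_pow (q+1) (1-x)).comp x h3
      refine this.congr_deriv ?_
      push_cast
      ring
    refine (h1.mul h2).congr_deriv ?_
    push_cast
    ring
  have hint : IntervalIntegrable (fun x : ℝ =>
      ((p:ℝ)+1) * (x ^ p * (1-x)^(q+1)) - ((q:ℝ)+1) * (x^(p+1) * (1-x)^q)) volume 0 1 := by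
    apply Continuous.intervalIntegrable; fun_prop
  have key := intervalIntegral.integral_eq_sub_of_hasDerivAt (fun x _ => h x) hint
  simp only [one_pow, sub_self, zero_pow, mul_zero, zero_mul, ne_eq, Nat.succ_ne_zero,
    not_false_iff, sub_zero, zero_sub] at key
  rw [intervalIntegral.integral_sub (by apply Continuous.intervalIntegrable; fun_prop)
    (by apply Continuous.intervalIntegrable; fun_prop),
    intervalIntegral.integral_const_mul, intervalIntegral.integral_const_mul] at key
  have : (1:ℝ)^(p+1) * (1-1)^(q+1) - 0^(p+1)*(1-0)^(q+1) = 0 := by norm_num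
  rw [Jb, Jb]
  linarith [key]

lemma Jb_split (p q : ℕ) : Jb p q = Jb (p+1) q + Jb p (q+1) := by
  rw [Jb, Jb, Jb, ← intervalIntegral.integral_add
    ((contJ (p+1) q).intervalIntegrable 0 1) ((contJ p (q+1)).intervalIntegrable 0 1)]
  apply intervalIntegral.integral_congr
  intro x _
  ring

lemma Jb_key (e b a : ℕ) :
    (((e:ℝ)+1)/((e:ℝ)+(b:ℝ)+2))^a * Jb e b ≤ Jb (e+a) b := by
  induction a with
  | zero => simp
  | succ a ih =>
    have hsplit := Jb_split (e+a) b
    have hparts := Jb_parts (e+a) b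
    -- (e+a+b+2) * Jb (e+a+1) b = (e+a+1) * Jb (e+a) b
    have hrec : ((e:ℝ)+(a:ℝ)+(b:ℝ)+2) * Jb (e+a+1) b = ((e:ℝ)+(a:ℝ)+1) * Jb (e+a) b := by
      push_cast at hparts hsplit ⊢
      nlinarith [hparts, hsplit]
    have hpos := Jb_pos (e+a) b
    have hx : (0:ℝ) ≤ ((e:ℝ)+1)/((e:ℝ)+(b:ℝ)+2) := by positivity
    have hstep : ((e:ℝ)+1)/((e:ℝ)+(b:ℝ)+2) * Jb (e+a) b ≤ Jb (e+a+1) b := by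
      rw [div_mul_eq_mul_div, div_le_iff₀ (by positivity)]
      nlinarith [hrec, hpos, mul_nonneg (Nat.cast_nonneg (α := ℝ) a) hpos.le,
        mul_nonneg (mul_nonneg (Nat.cast_nonneg (α := ℝ) a) (Nat.cast_nonneg (α := ℝ) b)) hpos.le]
    calc (((e:ℝ)+1)/((e:ℝ)+(b:ℝ)+2))^(a+1) * Jb e b
        = ((e:ℝ)+1)/((e:ℝ)+(b:ℝ)+2) * ((((e:ℝ)+1)/((e:ℝ)+(b:ℝ)+2))^a * Jb e b) := by ring
      _ ≤ ((e:ℝ)+1)/((e:ℝ)+(b:ℝ)+2) * Jb (e+a) b := by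
          exact mul_le_mul_of_nonneg_left ih hx
      _ ≤ Jb (e+a+1) b := hstep

lemma prod_integral_icc {n : ℕ} (g : Fin n → ℝ → ℝ) :
    (∫ x in Set.Icc (0 : Fin n → ℝ) 1, ∏ i, g i (x i))
      = ∏ i, ∫ t in Set.Icc (0:ℝ) 1, g i t := by
  have hIcc : Set.Icc (0 : Fin n → ℝ) 1 = Set.pi Set.univ fun _ => Set.Icc (0:ℝ) 1 := by
    rw [← Set.pi_univ_Icc]; rfl
  rw [hIcc, ← MeasureTheory.integral_indicator (MeasurableSet.univ_pi fun _ => measurableSet_Icc)]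
  have hind : (Set.pi Set.univ fun _ : Fin n => Set.Icc (0:ℝ) 1).indicator
      (fun x => ∏ i, g i (x i)) = fun x => ∏ i, (Set.Icc (0:ℝ) 1).indicator (g i) (x i) := by
    funext x
    by_cases hx : x ∈ Set.pi Set.univ fun _ : Fin n => Set.Icc (0:ℝ) 1
    · rw [Set.indicator_of_mem hx]
      exact Finset.prod_congr rfl fun i _ => (Set.indicator_of_mem (hx i trivial) _).symm
    · rw [Set.indicator_of_notMem hx]
      rw [Set.mem_univ_pi] at hx
      push_neg at hx
      obtain ⟨i, hi⟩ := hx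
      exact (Finset.prod_eq_zero (Finset.mem_univ i) (Set.indicator_of_notMem hi _)).symm
  rw [hind, volume_pi,
    MeasureTheory.integral_fintype_prod_eq_prod
      (fun i => (Set.Icc (0:ℝ) 1).indicator (g i))]
  exact Finset.prod_congr rfl fun i _ => integral_indicator measurableSet_Icc

theorem mean_value_le_fkH_of_nonneg_coeffs
    {n : ℕ} (hn : 1 ≤ n) (f : MvPolynomial (Fin n) ℝ)
    (hf : ∀ α, 0 ≤ f.coeff α)
    (k : ℕ) (hk : 1 ≤ k) (η β : Fin n → ℕ)
    (hsum : (∑ i, η i) + (∑ i, β i) = k)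
    (hopt : (∫ x in Set.Icc (0 : Fin n → ℝ) 1,
                eval x f * ∏ i, x i ^ η i * (1 - x i) ^ β i) /
            (∫ x in Set.Icc (0 : Fin n → ℝ) 1, ∏ i, x i ^ η i * (1 - x i) ^ β i)
          = fkH (Set.Icc (0 : Fin n → ℝ) 1) f k) :
    eval (fun i => ((η i : ℝ) + 1) / ((η i : ℝ) + (β i : ℝ) + 2)) f
      ≤ fkH (Set.Icc (0 : Fin n → ℝ) 1) f k := by
  rw [← hopt]
  have hD : (∫ x in Set.Icc (0:Fin n → ℝ) 1, ∏ i, x i ^ η i * (1 - x i) ^ β i)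
      = ∏ i, Jb (η i) (β i) := by
    have h := prod_integral_icc (fun i => fun t : ℝ => t ^ η i * (1 - t) ^ β i)
    rw [h]
    exact Finset.prod_congr rfl fun i _ => Jb_eq _ _
  have hDpos : 0 < ∏ i, Jb (η i) (β i) := Finset.prod_pos fun i _ => Jb_pos _ _
  have hint : ∀ x : Fin n → ℝ, eval x f * ∏ i, x i ^ η i * (1 - x i) ^ β i
      = ∑ d ∈ f.support, coeff d f * ∏ i, (x i ^ (d i + η i) * (1 - x i) ^ β i) := by
    intro x
    rw [eval_eq', Finset.sum_mul]
    refine Finset.sum_congr rfl fun d _ => ?_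
    rw [mul_assoc, ← Finset.prod_mul_distrib]
    refine congrArg _ (Finset.prod_congr rfl fun i _ => ?_)
    ring
  have hcont : ∀ (p q : Fin n → ℕ),
      Continuous (fun x : Fin n → ℝ => ∏ i, x i ^ p i * (1 - x i) ^ q i) := by
    intro p q
    exact continuous_finset_prod _ fun i _ =>
      ((continuous_apply i).pow _).mul ((continuous_const.sub (continuous_apply i)).pow _)
  have hN : (∫ x in Set.Icc (0:Fin n → ℝ) 1, eval x f * ∏ i, x i ^ η i * (1 - x i) ^ β i)
      = ∑ d ∈ f.support, coeff d f * ∏ i, Jb (d i + η i) (β i) := by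
    simp only [hint]
    rw [MeasureTheory.integral_finset_sum]
    · refine Finset.sum_congr rfl fun d _ => ?_
      rw [MeasureTheory.integral_const_mul]
      have h := prod_integral_icc (fun i => fun t : ℝ => t ^ (d i + η i) * (1 - t) ^ β i)
      rw [h]
      congr 1
      exact Finset.prod_congr rfl fun i _ => Jb_eq _ _
    · intro d _
      exact ((continuous_const.mul (hcont (fun i => d i + η i) β)).continuousOn).integrableOn_compact
        isCompact_Icc
  rw [hN, hD, le_div_iff₀ hDpos, eval_eq', Finset.sum_mul]
  refine Finset.sum_le_sum fun d _ => ?_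
  rw [mul_assoc, ← Finset.prod_mul_distrib]
  refine mul_le_mul_of_nonneg_left (Finset.prod_le_prod (fun i _ => ?_) (fun i _ => ?_)) (hf d)
  · exact mul_nonneg (pow_nonneg (by positivity) _) (Jb_pos _ _).le
  · rw [Nat.add_comm (d i) (η i)]
    exact Jb_key (η i) (β i) (d i)
end

section
/- Take K = [0,1]^n and let f ∈ ℝ[x₁,…,xₙ] be square-free (multilinear), i.e., f(x) = Σ_{α ∈ {0,1}^n} f_α x^α has degree at most one in each variable. Let (η,β) ∈ ℕ^n × ℕ^n with |η| + |β| = k attain the minimum in the definition of f_k^H, and define x̄ ∈ [0,1]^n by x̄_i := (η_i + 1)/(η_i + β_i + 2) for each i. Then f(x̄) = f_k^H; in particular f(x̄) ≤ f_k^H. -/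
open MvPolynomial MeasureTheory

lemma betaNat (a b : ℕ) : ∫ t in (0:ℝ)..1, t ^ a * (1 - t) ^ b
    = (a.factorial * b.factorial : ℝ) / (a + b + 1).factorial := by
  induction b generalizing a with
  | zero =>
    simp only [pow_zero, mul_one, Nat.factorial_zero, Nat.cast_one, integral_pow,
      Nat.add_zero, one_mul]
    rw [Nat.factorial_succ]
    have h1 : ((a:ℝ)+1) ≠ 0 := by positivity
    have h2 : (a.factorial : ℝ) ≠ 0 := by exact_mod_cast a.factorial_ne_zero
    push_cast
    field_simp
    simp
  | succ b ih =>
    have hu : ∀ x ∈ Set.uIcc (0:ℝ) 1, HasDerivAt (fun t : ℝ => (1 - t) ^ (b+1))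
        (-(((b:ℝ)+1) * (1 - x) ^ b)) x := by
      intro x _
      have := ((hasDerivAt_id x).const_sub 1).fun_pow (b+1)
      refine this.congr_deriv ?_
      simp only [id, Nat.add_sub_cancel]
      push_cast
      ring
    have hv : ∀ x ∈ Set.uIcc (0:ℝ) 1, HasDerivAt (fun t : ℝ => t ^ (a+1) / ((a:ℝ)+1))
        (x ^ a) x := by
      intro x _
      have := (hasDerivAt_pow (a+1) x).div_const ((a:ℝ)+1)
      have h2 : ((a:ℝ)+1) * x ^ a / ((a:ℝ)+1) = x ^ a := by
        have : ((a:ℝ)+1) ≠ 0 := by positivity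
        field_simp
      simp only [Nat.add_sub_cancel] at this
      push_cast at this
      rwa [h2] at this
    have hiu : IntervalIntegrable (fun x : ℝ => -(((b:ℝ)+1) * (1 - x) ^ b)) volume 0 1 :=
      (continuous_const.mul ((continuous_const.sub continuous_id).pow b)).neg.intervalIntegrable 0 1
    have hiv : IntervalIntegrable (fun x : ℝ => x ^ a) volume 0 1 :=
      (continuous_pow a).intervalIntegrable 0 1
    have ibp := intervalIntegral.integral_mul_deriv_eq_deriv_mul hu hv hiu hiv
    have e1 : (fun x : ℝ => (1-x)^(b+1) * x^a) = fun t : ℝ => t^a*(1-t)^(b+1) := by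
      funext t; ring
    have e2 : (fun x : ℝ => -(((b:ℝ)+1)*(1-x)^b) * (x^(a+1)/((a:ℝ)+1)))
        = fun x : ℝ => (-((b:ℝ)+1)/((a:ℝ)+1)) * (x^(a+1)*(1-x)^b) := by
      funext t; ring
    rw [e1, e2, intervalIntegral.integral_const_mul, ih (a+1)] at ibp
    rw [ibp]
    have h1 : ((a:ℝ)+1) ≠ 0 := by positivity
    have hf3 : ((a+1+b+1).factorial : ℝ) ≠ 0 := by exact_mod_cast Nat.factorial_ne_zero _
    have e3 : a+1+b+1 = a+b+2 := by omega
    have e4 : a+(b+1)+1 = a+b+2 := by omega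
    rw [e3, e4, Nat.factorial_succ (a), Nat.factorial_succ b]
    have hf4 : ((a+b+2).factorial : ℝ) ≠ 0 := by exact_mod_cast Nat.factorial_ne_zero _
    push_cast
    field_simp
    ring


lemma betaIcc (a b : ℕ) : ∫ t in Set.Icc (0:ℝ) 1, t ^ a * (1 - t) ^ b
    = (a.factorial * b.factorial : ℝ) / (a + b + 1).factorial := by
  rw [MeasureTheory.integral_Icc_eq_integral_Ioc,
    ← intervalIntegral.integral_of_le (zero_le_one)]
  exact betaNat a b

lemma betaIccPos (a b : ℕ) : 0 < ∫ t in Set.Icc (0:ℝ) 1, t ^ a * (1 - t) ^ b := by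
  rw [betaIcc]
  have h1 : 0 < (a.factorial : ℝ) := by exact_mod_cast a.factorial_pos
  have h2 : 0 < (b.factorial : ℝ) := by exact_mod_cast b.factorial_pos
  have h3 : 0 < ((a+b+1).factorial : ℝ) := by exact_mod_cast (a+b+1).factorial_pos
  positivity

lemma betaIccSucc (a b : ℕ) : ∫ t in Set.Icc (0:ℝ) 1, t ^ (a+1) * (1 - t) ^ b
    = (((a:ℝ)+1)/((a:ℝ)+(b:ℝ)+2)) * ∫ t in Set.Icc (0:ℝ) 1, t ^ a * (1 - t) ^ b := by
  rw [betaIcc, betaIcc]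
  have e1 : a+1+b+1 = (a+b+1)+1 := by omega
  rw [e1, Nat.factorial_succ (a+b+1), Nat.factorial_succ a]
  have h3 : ((a+b+1).factorial : ℝ) ≠ 0 := by exact_mod_cast (a+b+1).factorial_ne_zero
  have h4 : ((a:ℝ)+(b:ℝ)+2) ≠ 0 := by positivity
  push_cast
  field_simp
  ring

lemma boxProd {n : ℕ} (g : Fin n → ℝ → ℝ) :
    ∫ x in Set.Icc (0:Fin n → ℝ) 1, ∏ i, g i (x i)
      = ∏ i, ∫ t in Set.Icc (0:ℝ) 1, g i t := by
  rw [← integral_indicator measurableSet_Icc]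
  have h : (Set.Icc (0:Fin n → ℝ) 1).indicator (fun x => ∏ i, g i (x i))
      = fun x => ∏ i, (Set.Icc (0:ℝ) 1).indicator (g i) (x i) := by
    funext x
    by_cases hx : x ∈ Set.Icc (0:Fin n → ℝ) 1
    · rw [Set.indicator_of_mem hx]
      refine Finset.prod_congr rfl fun i _ => ?_
      rw [Set.indicator_of_mem]
      exact ⟨hx.1 i, hx.2 i⟩
    · rw [Set.indicator_of_notMem hx]
      obtain ⟨i, hi⟩ : ∃ i, x i ∉ Set.Icc (0:ℝ) 1 := by
        by_contra h
        push_neg at h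
        exact hx ⟨fun i => (h i).1, fun i => (h i).2⟩
      exact (Finset.prod_eq_zero (Finset.mem_univ i)
        (Set.indicator_of_notMem hi _)).symm
  rw [h, MeasureTheory.volume_pi, MeasureTheory.integral_fintype_prod_eq_prod
    (fun i => (Set.Icc (0:ℝ) 1).indicator (g i))]
  exact Finset.prod_congr rfl fun i _ => integral_indicator measurableSet_Icc

lemma keyNum {n : ℕ} (f : MvPolynomial (Fin n) ℝ) (hf : ∀ i, f.degreeOf i ≤ 1)
    (η β : Fin n → ℕ) :
    (∫ x in Set.Icc (0:Fin n → ℝ) 1, eval x f * ∏ i, x i ^ η i * (1 - x i) ^ β i)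
      = eval (fun i => ((η i : ℝ) + 1) / ((η i : ℝ) + (β i : ℝ) + 2)) f *
        ∫ x in Set.Icc (0:Fin n → ℝ) 1, ∏ i, x i ^ η i * (1 - x i) ^ β i := by
  set xb : Fin n → ℝ := fun i => ((η i : ℝ) + 1) / ((η i : ℝ) + (β i : ℝ) + 2) with hxb
  have step1 : (fun x : Fin n → ℝ => eval x f * ∏ i, x i ^ η i * (1 - x i) ^ β i)
      = fun x => ∑ d ∈ f.support, coeff d f * ∏ i, x i ^ (d i + η i) * (1 - x i) ^ β i := by
    funext x
    rw [eval_eq', Finset.sum_mul]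
    refine Finset.sum_congr rfl fun d _ => ?_
    rw [mul_assoc, ← Finset.prod_mul_distrib]
    refine congrArg _ (Finset.prod_congr rfl fun i _ => ?_)
    rw [pow_add]; ring
  have hint : ∀ d ∈ f.support, IntegrableOn
      (fun x : Fin n → ℝ => coeff d f * ∏ i, x i ^ (d i + η i) * (1 - x i) ^ β i)
      (Set.Icc 0 1) volume := by
    intro d _
    refine Continuous.integrableOn_Icc ?_
    exact continuous_const.mul (continuous_finset_prod _ fun i _ =>
      ((continuous_apply i).pow _).mul ((continuous_const.sub (continuous_apply i)).pow _))
  calc (∫ x in Set.Icc (0:Fin n → ℝ) 1, eval x f * ∏ i, x i ^ η i * (1 - x i) ^ β i)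
      = ∑ d ∈ f.support, ∫ x in Set.Icc (0:Fin n → ℝ) 1,
          coeff d f * ∏ i, x i ^ (d i + η i) * (1 - x i) ^ β i := by
        rw [step1]; exact integral_finset_sum _ hint
    _ = ∑ d ∈ f.support, coeff d f * ∏ i, ∫ t in Set.Icc (0:ℝ) 1,
          t ^ (d i + η i) * (1 - t) ^ β i := by
        refine Finset.sum_congr rfl fun d _ => ?_
        rw [MeasureTheory.integral_const_mul, boxProd (fun i t => t ^ (d i + η i) * (1 - t) ^ β i)]
    _ = ∑ d ∈ f.support, coeff d f * ((∏ i, xb i ^ d i) *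
          ∏ i, ∫ t in Set.Icc (0:ℝ) 1, t ^ η i * (1 - t) ^ β i) := by
        refine Finset.sum_congr rfl fun d hd => ?_
        rw [← Finset.prod_mul_distrib]
        refine congrArg _ (Finset.prod_congr rfl fun i _ => ?_)
        have hdi : d i ≤ 1 := le_trans (Finset.le_sup (f := fun m => m i) hd)
          (le_of_eq_of_le (degreeOf_eq_sup i f).symm (hf i))
        interval_cases h : d i
        · simp
        · rw [Nat.add_comm 1 (η i), betaIccSucc, pow_one]
    _ = (∑ d ∈ f.support, coeff d f * ∏ i, xb i ^ d i) *
          ∏ i, ∫ t in Set.Icc (0:ℝ) 1, t ^ η i * (1 - t) ^ β i := by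
        rw [Finset.sum_mul]
        exact Finset.sum_congr rfl fun d _ => (mul_assoc _ _ _).symm
    _ = _ := by rw [← eval_eq', ← boxProd]

theorem mean_value_eq_fkH_of_multilinear
    {n : ℕ} (hn : 1 ≤ n) (f : MvPolynomial (Fin n) ℝ)
    (hf : ∀ i, f.degreeOf i ≤ 1)
    (k : ℕ) (hk : 1 ≤ k) (η β : Fin n → ℕ)
    (hsum : (∑ i, η i) + (∑ i, β i) = k)
    (hopt : (∫ x in Set.Icc (0 : Fin n → ℝ) 1,
                eval x f * ∏ i, x i ^ η i * (1 - x i) ^ β i) /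
            (∫ x in Set.Icc (0 : Fin n → ℝ) 1, ∏ i, x i ^ η i * (1 - x i) ^ β i)
          = fkH (Set.Icc (0 : Fin n → ℝ) 1) f k) :
    eval (fun i => ((η i : ℝ) + 1) / ((η i : ℝ) + (β i : ℝ) + 2)) f
      = fkH (Set.Icc (0 : Fin n → ℝ) 1) f k := by
  rw [← hopt, keyNum f hf η β]
  have hD : (∫ x in Set.Icc (0:Fin n → ℝ) 1, ∏ i, x i ^ η i * (1 - x i) ^ β i) ≠ 0 := by
    rw [boxProd (fun i t => t ^ η i * (1 - t) ^ β i)]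
    exact ne_of_gt (Finset.prod_pos fun i _ => betaIccPos (η i) (β i))
  rw [mul_div_assoc, div_self hD, mul_one]
end
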